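/- arXiv:2407.12516 — 5 statements merged into one kernel-verified Lean document; each statement's English description precedes it below -/
import Mathlib

section
/- (Lemma 1, quantitative form.) Let L : ℝ^d → ℝ be differentiable with gradient ∇L Lipschitz continuous with constant L₀, and let θ ∈ ℝ^d and α > 0. Let z be a random vector in ℝ^d whose coordinates are mutually independent with mean 0 and variance 1, and suppose E[‖z‖³] < ∞. Then the two-point zeroth-order gradient estimator ∇^{ZO}L(θ) := ((L(θ + αz) − L(θ − αz))/(2α)) · z satisfies ‖E[∇^{ZO}L(θ)] − ∇L(θ)‖ ≤ (L₀ α / 2) · E[‖z‖³]. In particular, E[∇^{ZO}L(θ)] converges to ∇L(θ) as α → 0, i.e. the estimator is asymptotically unbiased. -/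
open MeasureTheory ProbabilityTheory
open scoped RealInnerProductSpace

/-!
The mean value inequality applied to `t ↦ L (θ + t • h) - L θ - t • L'(θ) h`, whose derivative has
norm at most `L₀ t ‖h‖²`, gives `|L (θ + h) - L (θ - h) - 2 ⟪∇L θ, h⟫| ≤ L₀ ‖h‖²`. Hence the
estimator at `z` differs from `⟪∇L θ, z⟫ • z` by at most `(L₀ α / 2) ‖z‖³`. Independent
coordinates of mean `0` and variance `1` satisfy `E[z_i z_j] = δ_ij`, so `E[⟪∇L θ, z⟫ • z] = ∇L θ`,
and integrating the pointwise bound gives the claim.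
-/

section Taylor

variable {E F : Type*} [NormedAddCommGroup E] [NormedSpace ℝ E]
  [NormedAddCommGroup F] [NormedSpace ℝ F]

theorem norm_sub_sub_fderiv_le_of_lipschitz_fderiv {f : E → F} {C : ℝ}
    (hf : Differentiable ℝ f) (hlip : ∀ x y, ‖fderiv ℝ f x - fderiv ℝ f y‖ ≤ C * ‖x - y‖)
    (x h : E) : ‖f (x + h) - f x - fderiv ℝ f x h‖ ≤ C / 2 * ‖h‖ ^ 2 := by
  set g : ℝ → F := fun t => f (x + t • h) - f x - t • fderiv ℝ f x h
  have hg : ∀ t, HasDerivAt g (fderiv ℝ f (x + t • h) h - fderiv ℝ f x h) t := fun t => by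
    have hline : HasDerivAt (fun t : ℝ => x + t • h) h t := by
      simpa using ((hasDerivAt_id t).smul_const h).const_add x
    exact ((((hf _).hasFDerivAt.comp_hasDerivAt t hline).sub_const (f x)).sub
      ((hasDerivAt_id t).smul_const (fderiv ℝ f x h))).congr_deriv (by rw [one_smul])
  have hB : ∀ t, HasDerivAt (fun t : ℝ => C / 2 * ‖h‖ ^ 2 * t ^ 2) (C * ‖h‖ ^ 2 * t) t :=
    fun t => ((hasDerivAt_pow 2 t).const_mul _).congr_deriv (by norm_num; ring)
  have hbound : ∀ t ∈ Set.Ico (0 : ℝ) 1,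
      ‖fderiv ℝ f (x + t • h) h - fderiv ℝ f x h‖ ≤ C * ‖h‖ ^ 2 * t := fun t ht =>
    calc ‖fderiv ℝ f (x + t • h) h - fderiv ℝ f x h‖
        ≤ ‖fderiv ℝ f (x + t • h) - fderiv ℝ f x‖ * ‖h‖ := by
          simpa using (fderiv ℝ f (x + t • h) - fderiv ℝ f x).le_opNorm h
      _ ≤ C * ‖x + t • h - x‖ * ‖h‖ := by gcongr; exact hlip _ _
      _ = C * ‖h‖ ^ 2 * t := by
          rw [add_sub_cancel_left, norm_smul, Real.norm_of_nonneg ht.1]; ring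
  simpa [g] using image_norm_le_of_norm_deriv_right_le_deriv_boundary
    (fun t _ => (hg t).continuousAt.continuousWithinAt) (fun t _ => (hg t).hasDerivWithinAt)
    (by simp [g]) hB hbound (Set.right_mem_Icc.2 zero_le_one)

end Taylor

section Gradient

variable {E : Type*} [NormedAddCommGroup E] [InnerProductSpace ℝ E] [CompleteSpace E]

theorem abs_sub_sub_inner_gradient_le {f : E → ℝ} {C : ℝ} (hf : Differentiable ℝ f)
    (hlip : ∀ x y, ‖gradient f x - gradient f y‖ ≤ C * ‖x - y‖) (x h : E) :
    |f (x + h) - f x - ⟪gradient f x, h⟫| ≤ C / 2 * ‖h‖ ^ 2 := by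
  have hlip' : ∀ x y, ‖fderiv ℝ f x - fderiv ℝ f y‖ ≤ C * ‖x - y‖ := fun x y => by
    rw [← toDual_gradient, ← toDual_gradient, ← map_sub, LinearIsometryEquiv.norm_map]
    exact hlip x y
  have := norm_sub_sub_fderiv_le_of_lipschitz_fderiv hf hlip' x h
  rwa [← toDual_gradient, InnerProductSpace.toDual_apply_apply, Real.norm_eq_abs] at this

theorem abs_central_difference_sub_inner_gradient_le {f : E → ℝ} {C : ℝ}
    (hf : Differentiable ℝ f) (hlip : ∀ x y, ‖gradient f x - gradient f y‖ ≤ C * ‖x - y‖)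
    (x h : E) : |f (x + h) - f (x - h) - 2 * ⟪gradient f x, h⟫| ≤ C * ‖h‖ ^ 2 := by
  have hplus := abs_sub_sub_inner_gradient_le hf hlip x h
  have hminus := abs_sub_sub_inner_gradient_le hf hlip x (-h)
  rw [← sub_eq_add_neg, inner_neg_right, norm_neg] at hminus
  calc |f (x + h) - f (x - h) - 2 * ⟪gradient f x, h⟫|
      = |(f (x + h) - f x - ⟪gradient f x, h⟫) - (f (x - h) - f x - -⟪gradient f x, h⟫)| := by
        congr 1; ring
    _ ≤ _ := abs_sub _ _
    _ ≤ C * ‖h‖ ^ 2 := by linarith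

end Gradient

section Estimator

variable {E : Type*} [NormedAddCommGroup E] [InnerProductSpace ℝ E]

noncomputable def twoPointGradEstimator (f : E → ℝ) (θ : E) (α : ℝ) (v : E) : E :=
  ((f (θ + α • v) - f (θ - α • v)) / (2 * α)) • v

theorem continuous_twoPointGradEstimator {f : E → ℝ} (hf : Continuous f) (θ : E) (α : ℝ) :
    Continuous (twoPointGradEstimator f θ α) := by
  unfold twoPointGradEstimator; fun_prop

theorem norm_twoPointGradEstimator_sub_le [CompleteSpace E] {f : E → ℝ} {C : ℝ}
    (hf : Differentiable ℝ f) (hlip : ∀ x y, ‖gradient f x - gradient f y‖ ≤ C * ‖x - y‖)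
    (θ : E) {α : ℝ} (hα : 0 < α) (v : E) :
    ‖twoPointGradEstimator f θ α v - ⟪gradient f θ, v⟫ • v‖ ≤ C * α / 2 * ‖v‖ ^ 3 := by
  have hdiff := abs_central_difference_sub_inner_gradient_le hf hlip θ (α • v)
  rw [real_inner_smul_right, norm_smul, Real.norm_of_nonneg hα.le] at hdiff
  have hsplit : (f (θ + α • v) - f (θ - α • v)) / (2 * α) - ⟪gradient f θ, v⟫
      = (f (θ + α • v) - f (θ - α • v) - 2 * (α * ⟪gradient f θ, v⟫)) / (2 * α) := by
    field_simp
  rw [twoPointGradEstimator, ← sub_smul, norm_smul, Real.norm_eq_abs, hsplit, abs_div,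
    abs_of_pos (by positivity : (0 : ℝ) < 2 * α)]
  calc _ ≤ C * (α * ‖v‖) ^ 2 / (2 * α) * ‖v‖ := by gcongr
    _ = C * α / 2 * ‖v‖ ^ 3 := by field_simp

end Estimator

section SecondMoments

variable {Ω ι : Type*} [MeasurableSpace Ω] {μ : Measure Ω}

theorem integral_mul_eq_ite_of_iIndepFun [DecidableEq ι] {X : ι → Ω → ℝ}
    (hX : ∀ i, AEStronglyMeasurable (X i) μ) (hindep : iIndepFun X μ)
    (hmean : ∀ i, ∫ ω, X i ω ∂μ = 0) (hvar : ∀ i, ∫ ω, X i ω ^ 2 ∂μ = 1) (i j : ι) :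
    ∫ ω, X i ω * X j ω ∂μ = if i = j then 1 else 0 := by
  by_cases hij : i = j
  · subst hij
    simpa [← sq] using hvar i
  · rw [if_neg hij, (hindep.indepFun hij).integral_fun_mul_eq_mul_integral (hX i) (hX j),
      hmean i, zero_mul]

variable [Fintype ι] {z : Ω → EuclideanSpace ℝ ι}

theorem integrable_inner_smul_self (hz : AEStronglyMeasurable z μ)
    (hz2 : Integrable (fun ω => ‖z ω‖ ^ 2) μ) (g : EuclideanSpace ℝ ι) :
    Integrable (fun ω => ⟪g, z ω⟫ • z ω) μ := by
  refine (hz2.const_mul ‖g‖).mono' (by fun_prop) (ae_of_all _ fun ω => ?_)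
  calc ‖⟪g, z ω⟫ • z ω‖ = |⟪g, z ω⟫| * ‖z ω‖ := by rw [norm_smul, Real.norm_eq_abs]
    _ ≤ ‖g‖ * ‖z ω‖ * ‖z ω‖ := by gcongr; exact abs_real_inner_le_norm _ _
    _ = ‖g‖ * ‖z ω‖ ^ 2 := by ring

theorem integrable_apply_mul_apply (hz : AEStronglyMeasurable z μ)
    (hz2 : Integrable (fun ω => ‖z ω‖ ^ 2) μ) (i j : ι) :
    Integrable (fun ω => z ω i * z ω j) μ := by
  have hcoord : ∀ k, AEStronglyMeasurable (fun ω => z ω k) μ := fun k =>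
    (EuclideanSpace.proj k).continuous.comp_aestronglyMeasurable hz
  refine hz2.mono' ((hcoord i).mul (hcoord j)) (ae_of_all _ fun ω => ?_)
  rw [norm_mul, sq]
  exact mul_le_mul (PiLp.norm_apply_le _ _) (PiLp.norm_apply_le _ _) (norm_nonneg _)
    (norm_nonneg _)

theorem integral_inner_smul_self_of_isotropic [DecidableEq ι] (hz : AEStronglyMeasurable z μ)
    (hz2 : Integrable (fun ω => ‖z ω‖ ^ 2) μ)
    (hcov : ∀ i j, ∫ ω, z ω i * z ω j ∂μ = if i = j then 1 else 0) (g : EuclideanSpace ℝ ι) :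
    ∫ ω, ⟪g, z ω⟫ • z ω ∂μ = g := by
  ext i
  calc (∫ ω, ⟪g, z ω⟫ • z ω ∂μ) i
      = ∫ ω, ∑ j, g j * (z ω j * z ω i) ∂μ := by
        change EuclideanSpace.proj (𝕜 := ℝ) i _ = _
        rw [← (EuclideanSpace.proj i).integral_comp_comm (integrable_inner_smul_self hz hz2 g)]
        congr 1 with ω
        simp only [map_smul, EuclideanSpace.coe_proj, smul_eq_mul, PiLp.inner_apply,
          RCLike.inner_apply, conj_trivial, Finset.sum_mul]
        exact Finset.sum_congr rfl fun j _ => by ring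
    _ = ∑ j, g j * ∫ ω, z ω j * z ω i ∂μ := by
        rw [integral_finsetSum _ fun j _ => (integrable_apply_mul_apply hz hz2 j i).const_mul _]
        simp only [integral_const_mul]
    _ = g i := by simp [hcov]

end SecondMoments

/-- **Lemma 1, quantitative form.** For `L : ℝ^d → ℝ` differentiable
with `L₀`-Lipschitz gradient, and `z` a random vector with mutually independent
coordinates of mean `0` and variance `1` and `E[‖z‖³] < ∞`, the two-point
zeroth-order estimator `((L(θ+αz) - L(θ-αz))/(2α)) • z` satisfies
`‖E[∇^{ZO}L(θ)] - ∇L(θ)‖ ≤ (L₀ α / 2) E[‖z‖³]`. -/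
theorem stmt1 {Ω : Type*} [MeasurableSpace Ω] {μ : Measure Ω} [IsProbabilityMeasure μ]
    {d : ℕ} (L : EuclideanSpace ℝ (Fin d) → ℝ) (L₀ : ℝ)
    (hdiff : Differentiable ℝ L)
    (hlip : ∀ x y, ‖gradient L x - gradient L y‖ ≤ L₀ * ‖x - y‖)
    (θ : EuclideanSpace ℝ (Fin d)) (α : ℝ) (hα : 0 < α)
    (z : Ω → EuclideanSpace ℝ (Fin d)) (hzm : Measurable z)
    (hindep : iIndepFun (fun i ω => z ω i) μ)
    (hmean : ∀ i, ∫ ω, z ω i ∂μ = 0)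
    (hvar : ∀ i, ∫ ω, (z ω i) ^ 2 ∂μ = 1)
    (hmom3 : Integrable (fun ω => ‖z ω‖ ^ 3) μ) :
    ‖(∫ ω, ((L (θ + α • z ω) - L (θ - α • z ω)) / (2 * α)) • z ω ∂μ) - gradient L θ‖
      ≤ L₀ * α / 2 * ∫ ω, ‖z ω‖ ^ 3 ∂μ := by
  set g := gradient L θ
  have hz := hzm.aestronglyMeasurable (μ := μ)
  have hz2 : Integrable (fun ω => ‖z ω‖ ^ 2) μ := integrable_norm_pow_of_le hz (by norm_num) hmom3
  have hcov := integral_mul_eq_ite_of_iIndepFun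
    (fun i => (EuclideanSpace.proj i).continuous.comp_aestronglyMeasurable hz) hindep hmean hvar
  have hlin := integrable_inner_smul_self hz hz2 g
  have herr := norm_twoPointGradEstimator_sub_le hdiff hlip θ hα
  have herr_int : Integrable (fun ω => twoPointGradEstimator L θ α (z ω) - ⟪g, z ω⟫ • z ω) μ :=
    (hmom3.const_mul _).mono'
      (((continuous_twoPointGradEstimator hdiff.continuous θ α).comp_aestronglyMeasurable hz).sub
        hlin.1) (ae_of_all _ fun ω => herr (z ω))
  have hest_int : Integrable (fun ω => twoPointGradEstimator L θ α (z ω)) μ :=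
    (herr_int.add hlin).congr (ae_of_all _ fun ω => sub_add_cancel _ _)
  calc ‖(∫ ω, twoPointGradEstimator L θ α (z ω) ∂μ) - g‖
      = ‖∫ ω, (twoPointGradEstimator L θ α (z ω) - ⟪g, z ω⟫ • z ω) ∂μ‖ := by
        rw [integral_sub hest_int hlin, integral_inner_smul_self_of_isotropic hz hz2 hcov]
    _ ≤ ∫ ω, L₀ * α / 2 * ‖z ω‖ ^ 3 ∂μ :=
        norm_integral_le_of_norm_le (hmom3.const_mul _) (ae_of_all _ fun ω => herr (z ω))
    _ = L₀ * α / 2 * ∫ ω, ‖z ω‖ ^ 3 ∂μ := integral_const_mul _ _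
end

section
/- (Lemma 3, two-point Jacobian estimator, quantitative form.) Let f : ℝ^d → ℝ^m be differentiable with derivative (Jacobian) J_f Lipschitz continuous with constant L_J in the operator norm, and let θ ∈ ℝ^d and α > 0. Let z be a random vector in ℝ^d whose coordinates are mutually independent with mean 0 and variance 1, and suppose E[‖z‖³] < ∞. Then the random d×m matrix z · ((f(θ + αz) − f(θ))/α)ᵀ satisfies ‖E[z · ((f(θ + αz) − f(θ))/α)ᵀ] − J_f(θ)ᵀ‖ ≤ (L_J α / 2) · E[‖z‖³], where the matrix norm is the operator norm induced by the Euclidean norms. In particular, in the limit α → 0 this estimator is an unbiased estimator of J_f(θ)ᵀ. -/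
/-!
Taylor's formula with an `L`-Lipschitz derivative gives
`α⁻¹ (f (θ + α v) - f θ) = J v + r v` with `‖r v‖ ≤ L α ‖v‖² / 2`, where `J = f'(θ)`.
Since the coordinates of `z` are uncorrelated with unit variance, `E[z zᵀ] = I`, so the linear
part contributes exactly `E[z (J z)ᵀ] = E[z zᵀ] Jᵀ = Jᵀ`, while the remainder contributes at most
`E[‖z‖ ‖r z‖] ≤ (L α / 2) E[‖z‖³]`.
-/

open MeasureTheory ProbabilityTheory
open scoped RealInnerProductSpace BigOperators

/-- The outer product `u vᵀ` of `u ∈ ℝ^d` and `v ∈ ℝ^m`, viewed as the linear map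
`ℝ^m → ℝ^d`, `e ↦ ⟪v, e⟫ • u`, equipped with the operator norm induced by the
Euclidean norms. -/
noncomputable def outerCLM {d m : ℕ} (u : EuclideanSpace ℝ (Fin d))
    (v : EuclideanSpace ℝ (Fin m)) :
    EuclideanSpace ℝ (Fin m) →L[ℝ] EuclideanSpace ℝ (Fin d) :=
  (innerSL ℝ v).smulRight u

section Taylor

variable {E F : Type*} [NormedAddCommGroup E] [NormedSpace ℝ E]
  [NormedAddCommGroup F] [NormedSpace ℝ F] {f : E → F} {L : ℝ} {x : E}

theorem norm_sub_sub_fderiv_apply_le_of_lipschitz (hf : Differentiable ℝ f)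
    (hlip : ∀ y, ‖fderiv ℝ f y - fderiv ℝ f x‖ ≤ L * ‖y - x‖) (h : E) :
    ‖f (x + h) - f x - fderiv ℝ f x h‖ ≤ L / 2 * ‖h‖ ^ 2 := by
  have hφ : ∀ t : ℝ, HasDerivAt (fun t : ℝ => f (x + t • h) - f x - t • fderiv ℝ f x h)
      (fderiv ℝ f (x + t • h) h - fderiv ℝ f x h) t := by
    intro t
    have hpath : HasDerivAt (fun t : ℝ => x + t • h) h t := by
      simpa using ((hasDerivAt_id t).smul_const h).const_add x
    have hderiv := (((hf _).hasFDerivAt.comp_hasDerivAt t hpath).sub_const (f x)).sub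
      ((hasDerivAt_id t).smul_const (fderiv ℝ f x h))
    simp only [id, one_smul] at hderiv
    exact hderiv
  have hB : ∀ t : ℝ, HasDerivAt (fun t : ℝ => L / 2 * ‖h‖ ^ 2 * t ^ 2) (L * ‖h‖ ^ 2 * t) t := by
    intro t
    refine ((hasDerivAt_pow 2 t).const_mul (L / 2 * ‖h‖ ^ 2)).congr_deriv ?_
    push_cast
    ring
  have key := image_norm_le_of_norm_deriv_right_le_deriv_boundary
    (fun t _ => (hφ t).continuousAt.continuousWithinAt) (fun t _ => (hφ t).hasDerivWithinAt)
    (by simp) hB (fun t ht => ?_) (Set.right_mem_Icc.2 zero_le_one)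
  · simpa using key
  calc ‖fderiv ℝ f (x + t • h) h - fderiv ℝ f x h‖
      = ‖(fderiv ℝ f (x + t • h) - fderiv ℝ f x) h‖ := rfl
    _ ≤ ‖fderiv ℝ f (x + t • h) - fderiv ℝ f x‖ * ‖h‖ := ContinuousLinearMap.le_opNorm _ _
    _ ≤ L * ‖t • h‖ * ‖h‖ := by
        gcongr
        simpa using hlip (x + t • h)
    _ = L * ‖h‖ ^ 2 * t := by
        rw [norm_smul, Real.norm_of_nonneg ht.1]
        ring

theorem norm_inv_smul_sub_sub_fderiv_apply_le_of_lipschitz (hf : Differentiable ℝ f)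
    (hlip : ∀ y, ‖fderiv ℝ f y - fderiv ℝ f x‖ ≤ L * ‖y - x‖) {α : ℝ} (hα : 0 < α) (v : E) :
    ‖α⁻¹ • (f (x + α • v) - f x) - fderiv ℝ f x v‖ ≤ L * α / 2 * ‖v‖ ^ 2 := by
  have hrescale : α⁻¹ • (f (x + α • v) - f x) - fderiv ℝ f x v
      = α⁻¹ • (f (x + α • v) - f x - fderiv ℝ f x (α • v)) := by
    rw [map_smul, smul_sub _ (f _ - f x), inv_smul_smul₀ hα.ne']
  calc ‖α⁻¹ • (f (x + α • v) - f x) - fderiv ℝ f x v‖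
      ≤ α⁻¹ * (L / 2 * ‖α • v‖ ^ 2) := by
        rw [hrescale, norm_smul, Real.norm_of_nonneg (inv_nonneg.2 hα.le)]
        gcongr
        exact norm_sub_sub_fderiv_apply_le_of_lipschitz hf hlip _
    _ = L * α / 2 * ‖v‖ ^ 2 := by
        rw [norm_smul, Real.norm_of_nonneg hα.le]
        field_simp

end Taylor

section OuterProduct

variable {d m k : ℕ}

theorem outerCLM_apply (u : EuclideanSpace ℝ (Fin d)) (v e : EuclideanSpace ℝ (Fin m)) :
    outerCLM u v e = ⟪v, e⟫ • u := rfl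

theorem norm_outerCLM (u : EuclideanSpace ℝ (Fin d)) (v : EuclideanSpace ℝ (Fin m)) :
    ‖outerCLM u v‖ = ‖v‖ * ‖u‖ := by
  rw [outerCLM, ContinuousLinearMap.norm_smulRight_apply, innerSL_apply_norm]

theorem outerCLM_sub_right (u : EuclideanSpace ℝ (Fin d)) (v w : EuclideanSpace ℝ (Fin m)) :
    outerCLM u (v - w) = outerCLM u v - outerCLM u w := by
  ext1 e
  simp only [outerCLM_apply, inner_sub_left, sub_smul, sub_apply]

theorem outerCLM_clm_apply_right (u : EuclideanSpace ℝ (Fin d)) (v : EuclideanSpace ℝ (Fin k))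
    (A : EuclideanSpace ℝ (Fin k) →L[ℝ] EuclideanSpace ℝ (Fin m)) :
    outerCLM u (A v) = (outerCLM u v).comp (ContinuousLinearMap.adjoint A) := by
  ext1 e
  simp only [outerCLM_apply, ContinuousLinearMap.comp_apply,
    ContinuousLinearMap.adjoint_inner_right]

@[fun_prop]
theorem Continuous.outerCLM {X : Type*} [TopologicalSpace X] {u : X → EuclideanSpace ℝ (Fin d)}
    {v : X → EuclideanSpace ℝ (Fin m)} (hu : Continuous u) (hv : Continuous v) :
    Continuous fun x => outerCLM (u x) (v x) :=
  isBoundedBilinearMap_smulRight.continuous.comp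
    (((innerSL ℝ).continuous.comp hv).prodMk hu)

end OuterProduct

section Covariance

variable {Ω : Type*} [MeasurableSpace Ω] {μ : Measure Ω}

theorem integral_mul_eq_ite_of_indepFun {ι : Type*} [DecidableEq ι] {X : ι → Ω → ℝ}
    (hX : ∀ i, AEStronglyMeasurable (X i) μ) (hindep : Pairwise fun i j => X i ⟂ᵢ[μ] X j)
    (hmean : ∀ i, ∫ ω, X i ω ∂μ = 0) (hvar : ∀ i, ∫ ω, X i ω ^ 2 ∂μ = 1) (i j : ι) :
    ∫ ω, X i ω * X j ω ∂μ = if i = j then 1 else 0 := by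
  split_ifs with hij
  · simpa [hij, sq] using hvar j
  · simpa [hmean i] using (hindep hij).integral_mul_eq_mul_integral (hX i) (hX j)

theorem integrable_outerCLM_self {d : ℕ} {z : Ω → EuclideanSpace ℝ (Fin d)}
    (hz : AEStronglyMeasurable z μ) (hz2 : Integrable (fun ω => ‖z ω‖ ^ 2) μ) :
    Integrable (fun ω => outerCLM (z ω) (z ω)) μ :=
  hz2.mono' (by fun_prop) (ae_of_all _ fun ω => by rw [norm_outerCLM, sq])

theorem integral_outerCLM_self_eq_one {d : ℕ} {z : Ω → EuclideanSpace ℝ (Fin d)}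
    (hz : AEStronglyMeasurable z μ) (hz2 : Integrable (fun ω => ‖z ω‖ ^ 2) μ)
    (hcov : ∀ i j, ∫ ω, z ω i * z ω j ∂μ = if i = j then 1 else 0) :
    ∫ ω, outerCLM (z ω) (z ω) ∂μ = 1 := by
  have hcoord : ∀ i, AEStronglyMeasurable (fun ω => z ω i) μ := fun i =>
    (EuclideanSpace.proj i).continuous.comp_aestronglyMeasurable hz
  have hmul : ∀ i j, Integrable (fun ω => z ω i * z ω j) μ := fun i j =>
    hz2.mono' ((hcoord i).mul (hcoord j)) (ae_of_all _ fun ω => by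
      rw [norm_mul, sq]
      exact mul_le_mul (PiLp.norm_apply_le _ i) (PiLp.norm_apply_le _ j) (norm_nonneg _)
        (norm_nonneg _))
  have hint := integrable_outerCLM_self hz hz2
  ext1 e
  rw [ContinuousLinearMap.integral_apply hint]
  ext i
  calc (∫ ω, outerCLM (z ω) (z ω) e ∂μ) i
      = ∫ ω, ∑ k, e k * (z ω k * z ω i) ∂μ := by
        refine ((EuclideanSpace.proj i).integral_comp_comm
          (hint.apply_continuousLinearMap e)).symm.trans
          (integral_congr_ae (ae_of_all _ fun ω => ?_))
        simp [outerCLM_apply, PiLp.inner_apply, Finset.mul_sum, mul_comm, mul_left_comm]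
    _ = ∑ k, e k * ∫ ω, z ω k * z ω i ∂μ := by
        rw [integral_finsetSum _ fun k _ => (hmul k i).const_mul (e k)]
        simp only [integral_const_mul]
    _ = (1 : EuclideanSpace ℝ (Fin d) →L[ℝ] EuclideanSpace ℝ (Fin d)) e i := by
        simp [hcov]

end Covariance

theorem norm_integral_outerCLM_sub_adjoint_le {Ω : Type*} [MeasurableSpace Ω] {μ : Measure Ω}
    {d m : ℕ} {z : Ω → EuclideanSpace ℝ (Fin d)} (hz : AEStronglyMeasurable z μ)
    (hz2 : Integrable (fun ω => ‖z ω‖ ^ 2) μ) (hz3 : Integrable (fun ω => ‖z ω‖ ^ 3) μ)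
    (hcov : ∫ ω, outerCLM (z ω) (z ω) ∂μ = 1)
    {g : EuclideanSpace ℝ (Fin d) → EuclideanSpace ℝ (Fin m)} (hg : Continuous g)
    (A : EuclideanSpace ℝ (Fin d) →L[ℝ] EuclideanSpace ℝ (Fin m)) {C : ℝ}
    (hgA : ∀ v, ‖g v - A v‖ ≤ C * ‖v‖ ^ 2) :
    ‖(∫ ω, outerCLM (z ω) (g (z ω)) ∂μ) - ContinuousLinearMap.adjoint A‖
      ≤ C * ∫ ω, ‖z ω‖ ^ 3 ∂μ := by
  have hremainder : ∀ v, ‖outerCLM v (g v) - outerCLM v (A v)‖ ≤ C * ‖v‖ ^ 3 := fun v => by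
    rw [← outerCLM_sub_right, norm_outerCLM, pow_succ, ← mul_assoc]
    exact mul_le_mul_of_nonneg_right (hgA v) (norm_nonneg v)
  have hlinear_int : Integrable (fun ω => outerCLM (z ω) (A (z ω))) μ :=
    (hz2.const_mul ‖A‖).mono' (by fun_prop) (ae_of_all _ fun ω => by
      rw [norm_outerCLM, sq, ← mul_assoc]
      exact mul_le_mul_of_nonneg_right (A.le_opNorm _) (norm_nonneg _))
  have hremainder_int : Integrable
      (fun ω => outerCLM (z ω) (g (z ω)) - outerCLM (z ω) (A (z ω))) μ :=
    (hz3.const_mul C).mono' (by fun_prop) (ae_of_all _ fun ω => hremainder (z ω))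
  have hlinear : ∫ ω, outerCLM (z ω) (A (z ω)) ∂μ = ContinuousLinearMap.adjoint A := by
    simp_rw [outerCLM_clm_apply_right]
    let precomp := (ContinuousLinearMap.compL ℝ (EuclideanSpace ℝ (Fin m))
      (EuclideanSpace ℝ (Fin d)) (EuclideanSpace ℝ (Fin d))).flip (ContinuousLinearMap.adjoint A)
    exact (precomp.integral_comp_comm (integrable_outerCLM_self hz hz2)).trans
      (by rw [hcov]; rfl)
  calc ‖(∫ ω, outerCLM (z ω) (g (z ω)) ∂μ) - ContinuousLinearMap.adjoint A‖
      = ‖∫ ω, (outerCLM (z ω) (g (z ω)) - outerCLM (z ω) (A (z ω))) ∂μ‖ := by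
        rw [integral_sub ((hremainder_int.add hlinear_int).congr
          (ae_of_all _ fun ω => sub_add_cancel _ _)) hlinear_int, hlinear]
    _ ≤ ∫ ω, C * ‖z ω‖ ^ 3 ∂μ :=
        norm_integral_le_of_norm_le (hz3.const_mul C) (ae_of_all _ fun ω => hremainder (z ω))
    _ = C * ∫ ω, ‖z ω‖ ^ 3 ∂μ := integral_const_mul C _

/-- **Lemma 3, two-point Jacobian estimator, quantitative form.**
For `f : ℝ^d → ℝ^m` differentiable with `L_J`-Lipschitz Jacobian (in operator
norm), and `z` with mutually independent coordinates of mean `0`, variance `1`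
and `E[‖z‖³] < ∞`, the random matrix `z ((f(θ+αz) - f(θ))/α)ᵀ` satisfies
`‖E[z ((f(θ+αz)-f(θ))/α)ᵀ] - J_f(θ)ᵀ‖ ≤ (L_J α / 2) E[‖z‖³]`. -/
theorem stmt4 {Ω : Type*} [MeasurableSpace Ω] {μ : Measure Ω} [IsProbabilityMeasure μ]
    {d m : ℕ} (f : EuclideanSpace ℝ (Fin d) → EuclideanSpace ℝ (Fin m)) (L_J : ℝ)
    (hdiff : Differentiable ℝ f)
    (hlip : ∀ x y, ‖fderiv ℝ f x - fderiv ℝ f y‖ ≤ L_J * ‖x - y‖)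
    (θ : EuclideanSpace ℝ (Fin d)) (α : ℝ) (hα : 0 < α)
    (z : Ω → EuclideanSpace ℝ (Fin d)) (hzm : Measurable z)
    (hindep : iIndepFun (fun i ω => z ω i) μ)
    (hmean : ∀ i, ∫ ω, z ω i ∂μ = 0)
    (hvar : ∀ i, ∫ ω, (z ω i) ^ 2 ∂μ = 1)
    (hmom3 : Integrable (fun ω => ‖z ω‖ ^ 3) μ) :
    ‖(∫ ω, outerCLM (z ω) (α⁻¹ • (f (θ + α • z ω) - f θ)) ∂μ)
        - ContinuousLinearMap.adjoint (fderiv ℝ f θ)‖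
      ≤ L_J * α / 2 * ∫ ω, ‖z ω‖ ^ 3 ∂μ := by
  have hz := hzm.aestronglyMeasurable (μ := μ)
  have hz2 : Integrable (fun ω => ‖z ω‖ ^ 2) μ :=
    integrable_norm_pow_of_le hz (by norm_num) hmom3
  have hcoord : ∀ i, AEStronglyMeasurable (fun ω => z ω i) μ := fun i =>
    (EuclideanSpace.proj i).continuous.comp_aestronglyMeasurable hz
  have hcov : ∫ ω, outerCLM (z ω) (z ω) ∂μ = 1 :=
    integral_outerCLM_self_eq_one hz hz2
      (integral_mul_eq_ite_of_indepFun hcoord (fun _ _ hij => hindep.indepFun hij) hmean hvar)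
  have hf := hdiff.continuous
  exact norm_integral_outerCLM_sub_adjoint_le (g := fun v => α⁻¹ • (f (θ + α • v) - f θ))
    hz hz2 hmom3 hcov (by fun_prop) _
    (norm_inv_smul_sub_sub_fderiv_apply_le_of_lipschitz hdiff (fun y => hlip y θ) hα)
end

section
/- (Per-coordinate variance of the two-point zeroth-order estimator; step in the proof of Proposition 1.) Let z be a random vector in ℝ^d whose coordinates are independent and identically distributed with mean 0, variance 1 and finite fourth moment, and set β := Var[z_1²]. Let g be a random vector in ℝ^d with finite second moments, defined on the same probability space and independent of z. Then for every coordinate i ∈ {1,…,d}: Var[(⟨g, z⟩ z)_i] = β · Var[g_i] + (β − 1) · (E[g_i])² + Σ_{j=1}^d E[g_j²]. -/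
/-!
Write `f := (⟪g, z⟫ z)_i = ∑ j, g_j (z_j z_i)`. Independence of `g` and `z` factors every
mixed moment into a `g`-moment times a `z`-moment, and independence and centring of the
coordinates of `z` kill every `E[z_j z_k z_i²]` off the diagonal `j = k`; on it the value is `1`
for `j ≠ i` and `E[z_i⁴] = β + 1` for `j = i`. Hence `E[f] = E[g_i]` and
`E[f²] = β E[g_i²] + ∑ j, E[g_j²]`; subtracting `E[f]²` gives the variance.
-/

open MeasureTheory ProbabilityTheory
open scoped ENNReal

instance ENNReal.HolderTriple.instFourFourTwo : ENNReal.HolderTriple 4 4 2 :=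
  ⟨by rw [← two_mul, show (4 : ℝ≥0∞) = 2 * 2 by norm_num, ENNReal.mul_inv (by simp) (by simp),
    ← mul_assoc, ENNReal.mul_inv_cancel (by simp) (by simp), one_mul]⟩

theorem Finset.sum_sum_mul_ite_ite {ι R : Type*} [Fintype ι] [DecidableEq ι] [CommRing R]
    (a : ι → ι → R) (c : R) (i : ι) :
    ∑ j, ∑ k, a j k * (if j = k then (if j = i then c else 1) else 0)
      = (c - 1) * a i i + ∑ j, a j j := by
  simp only [mul_ite, mul_one, mul_zero, Finset.sum_ite_eq, Finset.mem_univ, if_true]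
  rw [← Finset.add_sum_erase _ _ (Finset.mem_univ i),
    ← Finset.add_sum_erase _ _ (Finset.mem_univ i), if_pos rfl,
    Finset.sum_congr rfl fun j hj => if_neg (Finset.ne_of_mem_erase hj)]
  ring

theorem sq_sum_mul_mul_eq_sum_prod {ι R : Type*} [Fintype ι] [CommSemiring R] (a b : ι → R)
    (i : ι) :
    ((∑ j, a j * b j) * b i) ^ 2 = ∑ p : ι × ι, (a p.1 * a p.2) * (b p.1 * b p.2 * b i ^ 2) := by
  rw [Fintype.sum_prod_type, mul_pow, sq (∑ j, a j * b j), Finset.sum_mul_sum, Finset.sum_mul]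
  refine Finset.sum_congr rfl fun j _ => ?_
  rw [Finset.sum_mul]
  exact Finset.sum_congr rfl fun k _ => by ring

section

variable {Ω : Type*} [MeasurableSpace Ω] {μ : Measure Ω}

section Moments

variable [IsProbabilityMeasure μ] {X : Ω → ℝ}

theorem integral_sq_eq_variance_add_sq (hX : MemLp X 2 μ) :
    ∫ ω, X ω ^ 2 ∂μ = variance X μ + (∫ ω, X ω ∂μ) ^ 2 := by
  rw [variance_eq_sub hX]
  simp only [Pi.pow_apply]
  ring

theorem integral_pow_four_eq_variance_sq_add_sq (hX : MemLp X 4 μ) :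
    ∫ ω, X ω ^ 4 ∂μ = variance (fun ω => X ω ^ 2) μ + (∫ ω, X ω ^ 2 ∂μ) ^ 2 := by
  have hX2 : MemLp (fun ω => X ω ^ 2) 2 μ := by simpa only [sq] using hX.mul' hX
  rw [← integral_sq_eq_variance_add_sq hX2]
  simp only [← pow_mul]

end Moments

namespace ProbabilityTheory.iIndepFun

variable {ι : Type*} {X : ι → Ω → ℝ}

theorem integral_comp_mul_eq_zero (hind : iIndepFun X μ) (hX : ∀ j, AEMeasurable (X j) μ)
    (hmean : ∀ j, ∫ ω, X j ω ∂μ = 0) {φ : ℝ × ℝ → ℝ} (hφ : Measurable φ) {a b m : ι}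
    (ham : a ≠ m) (hbm : b ≠ m) : ∫ ω, φ (X a ω, X b ω) * X m ω ∂μ = 0 := by
  have h := (hind.indepFun_prodMk₀ hX a b m ham hbm).integral_fun_comp_mul_comp (f := φ)
    (g := id) ((hX a).prodMk (hX b)) (hX m) hφ.aestronglyMeasurable aestronglyMeasurable_id
  simpa [hmean m] using h

theorem integral_mul_eq_ite [DecidableEq ι] (hind : iIndepFun X μ)
    (hX : ∀ j, AEMeasurable (X j) μ) (hmean : ∀ j, ∫ ω, X j ω ∂μ = 0)
    (hsq : ∀ j, ∫ ω, X j ω ^ 2 ∂μ = 1) (j i : ι) :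
    ∫ ω, X j ω * X i ω ∂μ = if j = i then 1 else 0 := by
  split_ifs with hji
  · subst hji
    simpa only [sq] using hsq j
  · simpa [mul_comm] using
      hind.integral_comp_mul_eq_zero hX hmean measurable_fst (a := i) (b := i)
        (Ne.symm hji) (Ne.symm hji)

theorem integral_mul_mul_sq_eq_ite [DecidableEq ι] (hind : iIndepFun X μ)
    (hX : ∀ j, AEMeasurable (X j) μ) (hmean : ∀ j, ∫ ω, X j ω ∂μ = 0)
    (hsq : ∀ j, ∫ ω, X j ω ^ 2 ∂μ = 1)
    (i j k : ι) :
    ∫ ω, X j ω * X k ω * X i ω ^ 2 ∂μ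
      = if j = k then (if j = i then ∫ ω, X i ω ^ 4 ∂μ else 1) else 0 := by
  split_ifs with hjk hji
  · subst hjk hji
    congr 1 with ω
    ring
  · subst hjk
    have h := (hind.indepFun hji).integral_fun_comp_mul_comp (f := fun x => x ^ 2)
      (g := fun x => x ^ 2) (hX j) (hX i) (by fun_prop) (by fun_prop)
    rw [hsq, hsq, one_mul] at h
    rw [← h]
    congr 1 with ω
    ring
  · by_cases hji : j = i
    · subst hji
      rw [← hind.integral_comp_mul_eq_zero hX hmean (φ := fun p => p.1 * p.2 ^ 2) (by fun_prop)
        (a := j) (b := j) hjk hjk]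
      congr 1 with ω
      ring
    · rw [← hind.integral_comp_mul_eq_zero hX hmean (φ := fun p => p.1 * p.2 ^ 2) (by fun_prop)
        (Ne.symm hjk) (Ne.symm hji)]
      congr 1 with ω
      ring

end ProbabilityTheory.iIndepFun

namespace ProbabilityTheory.IndepFun

variable {E F κ : Type*} [MeasurableSpace E] [MeasurableSpace F] {G : Ω → E} {Z : Ω → F}
  {φ : κ → E → ℝ} {ψ : κ → F → ℝ}

theorem integrable_sum_comp_mul_comp (h : IndepFun G Z μ) (s : Finset κ)
    (hφ : ∀ k, Measurable (φ k)) (hψ : ∀ k, Measurable (ψ k))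
    (hφG : ∀ k, Integrable (fun ω => φ k (G ω)) μ)
    (hψZ : ∀ k, Integrable (fun ω => ψ k (Z ω)) μ) :
    Integrable (fun ω => ∑ k ∈ s, φ k (G ω) * ψ k (Z ω)) μ :=
  integrable_finsetSum s fun k _ => ((h.comp (hφ k) (hψ k)).integrable_mul (hφG k) (hψZ k))

theorem integral_sum_comp_mul_comp (h : IndepFun G Z μ) (s : Finset κ)
    (hφ : ∀ k, Measurable (φ k)) (hψ : ∀ k, Measurable (ψ k))
    (hφG : ∀ k, Integrable (fun ω => φ k (G ω)) μ)
    (hψZ : ∀ k, Integrable (fun ω => ψ k (Z ω)) μ) :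
    ∫ ω, ∑ k ∈ s, φ k (G ω) * ψ k (Z ω) ∂μ
      = ∑ k ∈ s, (∫ ω, φ k (G ω) ∂μ) * ∫ ω, ψ k (Z ω) ∂μ := by
  have hint (k : κ) : Integrable (fun ω => φ k (G ω) * ψ k (Z ω)) μ :=
    (h.comp (hφ k) (hψ k)).integrable_mul (hφG k) (hψZ k)
  rw [integral_finsetSum s fun k _ => hint k]
  exact Finset.sum_congr rfl fun k _ =>
    (h.comp (hφ k) (hψ k)).integral_mul_eq_mul_integral (hφG k).1 (hψZ k).1

end ProbabilityTheory.IndepFun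

section Estimator

variable {ι : Type*} [Fintype ι] {g z : Ω → ι → ℝ}

theorem integrable_mul_mul_sq_of_memLp_four {X Y W : Ω → ℝ} (hX : MemLp X 4 μ)
    (hY : MemLp Y 4 μ) (hW : MemLp W 4 μ) : Integrable (fun ω => X ω * Y ω * W ω ^ 2) μ := by
  have hW2 : MemLp (fun ω => W ω ^ 2) 2 μ := by simpa only [sq] using hW.mul' hW
  exact (hY.mul' (r := 2) hX).integrable_mul hW2

theorem integral_sum_mul_mul_of_indepFun (hind : IndepFun g z μ)
    (hg : ∀ j, Integrable (fun ω => g ω j) μ) (hz : ∀ j, MemLp (fun ω => z ω j) 2 μ) (i : ι) :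
    ∫ ω, (∑ j, g ω j * z ω j) * z ω i ∂μ
      = ∑ j, (∫ ω, g ω j ∂μ) * ∫ ω, z ω j * z ω i ∂μ := by
  simp only [Finset.sum_mul, mul_assoc]
  exact hind.integral_sum_comp_mul_comp (φ := fun j v => v j) (ψ := fun j v => v j * v i) _
    (fun j => measurable_pi_apply j) (fun j => by fun_prop) hg
    (fun j => (hz j).integrable_mul (hz i))

theorem integrable_sum_mul_mul_sq_of_indepFun (hind : IndepFun g z μ)
    (hg : ∀ j, MemLp (fun ω => g ω j) 2 μ) (hz : ∀ j, MemLp (fun ω => z ω j) 4 μ) (i : ι) :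
    Integrable (fun ω => ((∑ j, g ω j * z ω j) * z ω i) ^ 2) μ := by
  simp only [sq_sum_mul_mul_eq_sum_prod]
  exact hind.integrable_sum_comp_mul_comp (φ := fun (p : ι × ι) v => v p.1 * v p.2)
    (ψ := fun p v => v p.1 * v p.2 * v i ^ 2) _ (fun p => by fun_prop) (fun p => by fun_prop)
    (fun p => (hg p.1).integrable_mul (hg p.2))
    (fun p => integrable_mul_mul_sq_of_memLp_four (hz p.1) (hz p.2) (hz i))

theorem integral_sum_mul_mul_sq_of_indepFun (hind : IndepFun g z μ)
    (hg : ∀ j, MemLp (fun ω => g ω j) 2 μ) (hz : ∀ j, MemLp (fun ω => z ω j) 4 μ) (i : ι) :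
    ∫ ω, ((∑ j, g ω j * z ω j) * z ω i) ^ 2 ∂μ
      = ∑ j, ∑ k, (∫ ω, g ω j * g ω k ∂μ) * ∫ ω, z ω j * z ω k * z ω i ^ 2 ∂μ := by
  simp only [sq_sum_mul_mul_eq_sum_prod]
  rw [hind.integral_sum_comp_mul_comp (φ := fun (p : ι × ι) v => v p.1 * v p.2)
    (ψ := fun p v => v p.1 * v p.2 * v i ^ 2) _ (fun p => by fun_prop) (fun p => by fun_prop)
    (fun p => (hg p.1).integrable_mul (hg p.2))
    (fun p => integrable_mul_mul_sq_of_memLp_four (hz p.1) (hz p.2) (hz i)),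
    Fintype.sum_prod_type]

theorem memLp_sum_mul_mul_of_indepFun (hind : IndepFun g z μ)
    (hg : ∀ j, MemLp (fun ω => g ω j) 2 μ) (hz : ∀ j, MemLp (fun ω => z ω j) 4 μ) (i : ι) :
    MemLp (fun ω => (∑ j, g ω j * z ω j) * z ω i) 2 μ := by
  have hmeas : AEStronglyMeasurable (fun ω => (∑ j, g ω j * z ω j) * z ω i) μ :=
    (Finset.aestronglyMeasurable_fun_sum _ fun j _ => (hg j).1.mul (hz j).1).mul (hz i).1
  exact (memLp_two_iff_integrable_sq hmeas).2 (integrable_sum_mul_mul_sq_of_indepFun hind hg hz i)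

end Estimator

end

theorem stmt6_general {Ω : Type*} [MeasurableSpace Ω] {μ : Measure Ω} [IsProbabilityMeasure μ]
    {d : ℕ} (z g : Ω → Fin d → ℝ) (β : ℝ)
    (hzindep : iIndepFun (fun i ω => z ω i) μ)
    (hmean : ∀ i, ∫ ω, z ω i ∂μ = 0)
    (hvar : ∀ i, variance (fun ω => z ω i) μ = 1)
    (hmom4 : ∀ i, MemLp (fun ω => z ω i) 4 μ)
    (hβ : ∀ i, variance (fun ω => (z ω i) ^ 2) μ = β)
    (hg2 : ∀ i, MemLp (fun ω => g ω i) 2 μ)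
    (hindep : IndepFun g z μ) :
    ∀ i, variance (fun ω => (∑ j, g ω j * z ω j) * z ω i) μ
      = β * variance (fun ω => g ω i) μ + (β - 1) * (∫ ω, g ω i ∂μ) ^ 2
        + ∑ j, ∫ ω, (g ω j) ^ 2 ∂μ := by
  intro i
  have hz (j : Fin d) : AEMeasurable (fun ω => z ω j) μ := (hmom4 j).aemeasurable
  have hzL2 (j : Fin d) : MemLp (fun ω => z ω j) 2 μ := (hmom4 j).mono_exponent (by norm_num)
  have hsq (j : Fin d) : ∫ ω, z ω j ^ 2 ∂μ = 1 := by
    rw [integral_sq_eq_variance_add_sq (hzL2 j), hvar, hmean]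
    norm_num
  have h4 : ∫ ω, z ω i ^ 4 ∂μ = β + 1 := by
    rw [integral_pow_four_eq_variance_sq_add_sq (hmom4 i), hβ, hsq]
    norm_num
  have hmean_f : ∫ ω, (∑ j, g ω j * z ω j) * z ω i ∂μ = ∫ ω, g ω i ∂μ := by
    rw [integral_sum_mul_mul_of_indepFun hindep (fun j => (hg2 j).integrable one_le_two) hzL2]
    simp [hzindep.integral_mul_eq_ite hz hmean hsq]
  have hsq_f : ∫ ω, ((∑ j, g ω j * z ω j) * z ω i) ^ 2 ∂μ
      = β * ∫ ω, g ω i ^ 2 ∂μ + ∑ j, ∫ ω, g ω j ^ 2 ∂μ := by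
    rw [integral_sum_mul_mul_sq_of_indepFun hindep hg2 hmom4]
    simp only [hzindep.integral_mul_mul_sq_eq_ite hz hmean hsq, h4, Finset.sum_sum_mul_ite_ite,
      ← sq]
    ring
  rw [variance_eq_sub (memLp_sum_mul_mul_of_indepFun hindep hg2 hmom4 i), variance_eq_sub (hg2 i)]
  simp only [Pi.pow_apply]
  rw [hmean_f, hsq_f]
  ring

/-- **per-coordinate variance of the two-point ZO estimator.**
For `z` with i.i.d. coordinates of mean `0`, variance `1` and finite fourth
moment, `β := Var[z₁²]`, and `g` with finite second moments independent of `z`,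
`Var[(⟪g,z⟫ z)_i] = β Var[g_i] + (β-1) (E[g_i])² + ∑_j E[g_j²]` for each `i`,
where `(⟪g,z⟫ z)_i = (∑_j g_j z_j) z_i`. -/
theorem stmt6 {Ω : Type*} [MeasurableSpace Ω] {μ : Measure Ω} [IsProbabilityMeasure μ]
    {d : ℕ} (z g : Ω → Fin d → ℝ) (β : ℝ)
    (hzm : Measurable z) (hgm : Measurable g)
    (hzindep : iIndepFun (fun i ω => z ω i) μ)
    (hzid : ∀ i j, IdentDistrib (fun ω => z ω i) (fun ω => z ω j) μ μ)
    (hmean : ∀ i, ∫ ω, z ω i ∂μ = 0)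
    (hvar : ∀ i, variance (fun ω => z ω i) μ = 1)
    (hmom4 : ∀ i, MemLp (fun ω => z ω i) 4 μ)
    (hβ : ∀ i, variance (fun ω => (z ω i) ^ 2) μ = β)
    (hg2 : ∀ i, MemLp (fun ω => g ω i) 2 μ)
    (hindep : IndepFun g z μ) :
    ∀ i, variance (fun ω => (∑ j, g ω j * z ω j) * z ω i) μ
      = β * variance (fun ω => g ω i) μ + (β - 1) * (∫ ω, g ω i ∂μ) ^ 2
        + ∑ j, ∫ ω, (g ω j) ^ 2 ∂μ :=
  stmt6_general z g β hzindep hmean hvar hmom4 hβ hg2 hindep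
end

section
/- (Discrepancy bound under Lipschitz-type conditions; step in the proof of Proposition 2.) Let n ≥ 1, let x_1, …, x_n be points in ℝ^p, let A_1, …, A_n be d×m real matrices satisfying ‖A_i − A_j‖ ≤ L_A ‖x_i − x_j‖ for all i, j (operator norm induced by Euclidean norms), and let v_1, …, v_n ∈ ℝ^m satisfy ‖v_i − v_j‖ ≤ L_v ‖x_i − x_j‖ for all i, j. Then ‖(1/n) Σ_{i=1}^n A_i v_i − ((1/n) Σ_{i=1}^n A_i)((1/n) Σ_{j=1}^n v_j)‖ ≤ (1/2) L_A L_v Δ, where Δ := (1/n²) Σ_{i=1}^n Σ_{j=1}^n ‖x_i − x_j‖². -/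
open scoped BigOperators

/-- **discrepancy bound under Lipschitz-type conditions.**
If `‖A_i − A_j‖ ≤ L_A ‖x_i − x_j‖` (operator norm induced by Euclidean norms)
and `‖v_i − v_j‖ ≤ L_v ‖x_i − x_j‖`, then
`‖(1/n) ∑_i A_i v_i − ((1/n) ∑_i A_i)((1/n) ∑_j v_j)‖ ≤ (1/2) L_A L_v Δ`,
where `Δ = (1/n²) ∑_{i,j} ‖x_i − x_j‖²`. -/
theorem stmt11 {p d m n : ℕ} (hn : 1 ≤ n) (L_A L_v : ℝ)
    (x : Fin n → EuclideanSpace ℝ (Fin p))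
    (A : Fin n → EuclideanSpace ℝ (Fin m) →L[ℝ] EuclideanSpace ℝ (Fin d))
    (v : Fin n → EuclideanSpace ℝ (Fin m))
    (hA : ∀ i j, ‖A i - A j‖ ≤ L_A * ‖x i - x j‖)
    (hv : ∀ i j, ‖v i - v j‖ ≤ L_v * ‖x i - x j‖) :
    ‖(n : ℝ)⁻¹ • ∑ i, A i (v i) - ((n : ℝ)⁻¹ • ∑ i, A i) ((n : ℝ)⁻¹ • ∑ j, v j)‖
      ≤ (1 / 2) * L_A * L_v * (((n : ℝ) ^ 2)⁻¹ * ∑ i, ∑ j, ‖x i - x j‖ ^ 2) := by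
  have hn0 : (0:ℝ) < (n:ℝ) := by exact_mod_cast hn
  set T := ∑ i, A i (v i) with hT
  set B := (∑ i, A i) (∑ j, v j) with hB
  have h1 : ∀ i j : Fin n, (A i - A j) (v i - v j)
      = A i (v i) - A i (v j) - A j (v i) + A j (v j) := by
    intro i j
    simp only [ContinuousLinearMap.sub_apply, map_sub]
    abel
  have hBsum : ∑ i, ∑ j, A i (v j) = B := by
    rw [hB, ContinuousLinearMap.sum_apply]
    exact Finset.sum_congr rfl fun i _ => (map_sum (A i) _ _).symm
  have expand : ∑ i, ∑ j, (A i - A j) (v i - v j)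
      = ((2*n : ℝ)) • T - (2:ℝ) • B := by
    have e1 : ∑ i : Fin n, ∑ j : Fin n, (A i) (v i) = (n:ℝ) • T := by
      simp only [Finset.sum_const, Finset.card_univ, Fintype.card_fin, hT,
        ← Nat.cast_smul_eq_nsmul ℝ, Finset.smul_sum]
    have e2 : ∑ i : Fin n, ∑ j : Fin n, (A j) (v j) = (n:ℝ) • T := by
      rw [Finset.sum_comm]; exact e1
    have e3 : ∑ i : Fin n, ∑ j : Fin n, (A j) (v i) = B := by
      rw [Finset.sum_comm]; exact hBsum
    simp only [h1, Finset.sum_add_distrib, Finset.sum_sub_distrib, e1, e2, e3, hBsum]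
    module
  have key : (n : ℝ)⁻¹ • ∑ i, A i (v i) - ((n : ℝ)⁻¹ • ∑ i, A i) ((n : ℝ)⁻¹ • ∑ j, v j)
      = (2 * (n:ℝ)^2)⁻¹ • ∑ i, ∑ j, (A i - A j) (v i - v j) := by
    rw [expand]
    have happ : ((n : ℝ)⁻¹ • ∑ i, A i) ((n : ℝ)⁻¹ • ∑ j, v j)
        = ((n:ℝ)⁻¹ * (n:ℝ)⁻¹) • B := by
      simp [ContinuousLinearMap.smul_apply, map_smul, hB,
        ContinuousLinearMap.sum_apply, map_sum, ← Finset.smul_sum, smul_smul]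
    rw [happ, ← hT]
    match_scalars <;> field_simp <;> ring
  rw [key]
  have hbound : ∀ i j : Fin n, ‖(A i - A j) (v i - v j)‖ ≤ L_A * L_v * ‖x i - x j‖^2 := by
    intro i j
    calc ‖(A i - A j) (v i - v j)‖ ≤ ‖A i - A j‖ * ‖v i - v j‖ :=
          (A i - A j).le_opNorm _
      _ ≤ (L_A * ‖x i - x j‖) * (L_v * ‖x i - x j‖) :=
          mul_le_mul (hA i j) (hv i j) (norm_nonneg _)
            (le_trans (norm_nonneg _) (hA i j))
      _ = L_A * L_v * ‖x i - x j‖^2 := by ring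
  calc ‖(2 * (n:ℝ)^2)⁻¹ • ∑ i, ∑ j, (A i - A j) (v i - v j)‖
      = (2 * (n:ℝ)^2)⁻¹ * ‖∑ i, ∑ j, (A i - A j) (v i - v j)‖ := by
        rw [norm_smul, Real.norm_eq_abs, abs_of_pos (by positivity)]
    _ ≤ (2 * (n:ℝ)^2)⁻¹ * ∑ i, ∑ j, ‖(A i - A j) (v i - v j)‖ := by
        gcongr
        exact (norm_sum_le _ _).trans (Finset.sum_le_sum fun i _ => norm_sum_le _ _)
    _ ≤ (2 * (n:ℝ)^2)⁻¹ * ∑ i, ∑ j, L_A * L_v * ‖x i - x j‖^2 := by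
        refine mul_le_mul_of_nonneg_left ?_ (by positivity)
        exact Finset.sum_le_sum fun i _ => Finset.sum_le_sum fun j _ => hbound i j
    _ = (1 / 2) * L_A * L_v * (((n : ℝ) ^ 2)⁻¹ * ∑ i, ∑ j, ‖x i - x j‖ ^ 2) := by
        simp only [← Finset.mul_sum]
        field_simp
end

section
/- (Proposition 2: descent direction of the pseudo-zeroth-order gradient.) Let n ≥ 1, let x_1, …, x_n be points in ℝ^p, let J_1, …, J_n be d×m real matrices (representing the transposed Jacobians J_fᵀ(x_i)) satisfying ‖J_i − J_j‖ ≤ L_J ‖x_i − x_j‖ for all i, j (operator norm induced by Euclidean norms), and let e_1, …, e_n ∈ ℝ^m (representing the errors e(x_i)) satisfy ‖e_i − e_j‖ ≤ L_e ‖x_i − x_j‖ for all i, j. Let ε be a fixed d×m matrix and set M := (1/n) Σ_i J_i + ε, ē := (1/n) Σ_i e_i, g := (1/n) Σ_i J_i e_i, Δ_x := (1/n²) Σ_{i,j} ‖x_i − x_j‖², and e_ε := ‖ε ē‖. If ‖g‖ > (1/2) L_J L_e Δ_x + e_ε, then ⟨g, M ē⟩ > 0; that is, the feedback direction M ē makes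 a positive inner product with the true average gradient direction g. -/
open scoped BigOperators RealInnerProductSpace

/-!
The gap between the true direction `g = mean (J i (e i))` and `(mean J) ē` is a covariance,
`(1 / (2 n²)) ∑ i j, (J i - J j) (e i - e j)`, so by the two Lipschitz bounds its norm is at most
`(1/2) L_J L_e Δ_x`. Writing `M ē = g - (g - (mean J) ē) + ε ē`, Cauchy–Schwarz gives
`⟪g, M ē⟫ ≥ ‖g‖ (‖g‖ - (1/2) L_J L_e Δ_x - e_ε) > 0`.
-/

open Finset

section Covariance

variable {ι E F : Type*} [Fintype ι]
  [NormedAddCommGroup E] [NormedSpace ℝ E] [NormedAddCommGroup F] [NormedSpace ℝ F]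

theorem sum_sum_apply_sub_apply_sub (J : ι → E →L[ℝ] F) (e : ι → E) :
    ∑ i, ∑ j, (J i - J j) (e i - e j)
      = (2 : ℕ) • (Fintype.card ι • ∑ i, J i (e i) - (∑ i, J i) (∑ i, e i)) := by
  have expand : ∀ i j,
      (J i - J j) (e i - e j) = J i (e i) + J j (e j) - (J i (e j) + J j (e i)) := by
    intro i j
    simp only [sub_apply, map_sub]
    abel
  have cross : (∑ i, J i) (∑ i, e i) = ∑ i, ∑ j, J i (e j) := by
    simp only [_root_.sum_apply, map_sum]
    exact sum_comm
  simp only [expand, sum_sub_distrib, sum_add_distrib, sum_const, card_univ, cross]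
  rw [sum_comm (f := fun i j => J j (e i)), ← smul_sum]
  abel

theorem inv_card_smul_sum_apply_sub_apply_inv_card_smul_sum (J : ι → E →L[ℝ] F) (e : ι → E) :
    (Fintype.card ι : ℝ)⁻¹ • ∑ i, J i (e i)
        - ((Fintype.card ι : ℝ)⁻¹ • ∑ i, J i) ((Fintype.card ι : ℝ)⁻¹ • ∑ i, e i)
      = (2 * (Fintype.card ι : ℝ) ^ 2)⁻¹ • ∑ i, ∑ j, (J i - J j) (e i - e j) := by
  set n : ℝ := (Fintype.card ι : ℝ)
  rw [sum_sum_apply_sub_apply_sub, smul_apply, map_smul, smul_smul,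
    ← Nat.cast_smul_eq_nsmul ℝ, ← Nat.cast_smul_eq_nsmul ℝ, smul_smul, smul_sub, smul_smul]
  have hsq : n⁻¹ * n⁻¹ = (2 * n ^ 2)⁻¹ * (2 : ℕ) := by push_cast; field_simp
  have hlin : n⁻¹ = (2 * n ^ 2)⁻¹ * (2 : ℕ) * n := by
    rcases eq_or_ne n 0 with hn | hn
    · simp [hn]
    · push_cast; field_simp
  rw [hsq, ← hlin]

theorem norm_sum_sum_apply_sub_apply_sub_le {X : Type*} [SeminormedAddCommGroup X]
    (J : ι → E →L[ℝ] F) (e : ι → E) (x : ι → X) {L_J L_e : ℝ}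
    (hJ : ∀ i j, ‖J i - J j‖ ≤ L_J * ‖x i - x j‖)
    (he : ∀ i j, ‖e i - e j‖ ≤ L_e * ‖x i - x j‖) :
    ‖∑ i, ∑ j, (J i - J j) (e i - e j)‖ ≤ L_J * L_e * ∑ i, ∑ j, ‖x i - x j‖ ^ 2 := by
  simp only [mul_sum]
  refine (norm_sum_le _ _).trans (sum_le_sum fun i _ => ?_)
  refine (norm_sum_le _ _).trans (sum_le_sum fun j _ => ?_)
  calc ‖(J i - J j) (e i - e j)‖ ≤ ‖J i - J j‖ * ‖e i - e j‖ := (J i - J j).le_opNorm _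
    _ ≤ (L_J * ‖x i - x j‖) * (L_e * ‖x i - x j‖) :=
        mul_le_mul (hJ i j) (he i j) (norm_nonneg _) ((norm_nonneg _).trans (hJ i j))
    _ = L_J * L_e * ‖x i - x j‖ ^ 2 := by ring

end Covariance

theorem real_inner_add_pos_of_norm_sub_add_norm_lt {E : Type*} [NormedAddCommGroup E]
    [InnerProductSpace ℝ E] {g a b : E} (h : ‖g - a‖ + ‖b‖ < ‖g‖) : 0 < ⟪g, a + b⟫ := by
  have hg : 0 < ‖g‖ := lt_of_le_of_lt (by positivity) h
  have hga : ⟪g, g - a⟫ ≤ ‖g‖ * ‖g - a‖ := real_inner_le_norm _ _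
  have hgb : -⟪g, b⟫ ≤ ‖g‖ * ‖b‖ := by
    simpa using real_inner_le_norm g (-b)
  have hsplit : ⟪g, a + b⟫ = ‖g‖ ^ 2 - ⟪g, g - a⟫ + ⟪g, b⟫ := by
    rw [inner_add_right, inner_sub_right, real_inner_self_eq_norm_sq]
    ring
  nlinarith [mul_lt_mul_of_pos_left h hg]

theorem stmt12_general {p d m n : ℕ} (L_J L_e : ℝ)
    (x : Fin n → EuclideanSpace ℝ (Fin p))
    (J : Fin n → EuclideanSpace ℝ (Fin m) →L[ℝ] EuclideanSpace ℝ (Fin d))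
    (e : Fin n → EuclideanSpace ℝ (Fin m))
    (ε : EuclideanSpace ℝ (Fin m) →L[ℝ] EuclideanSpace ℝ (Fin d))
    (hJ : ∀ i j, ‖J i - J j‖ ≤ L_J * ‖x i - x j‖)
    (he : ∀ i j, ‖e i - e j‖ ≤ L_e * ‖x i - x j‖)
    (hbig : ‖(n : ℝ)⁻¹ • ∑ i, J i (e i)‖
      > (1 / 2) * L_J * L_e * (((n : ℝ) ^ 2)⁻¹ * ∑ i, ∑ j, ‖x i - x j‖ ^ 2)
        + ‖ε ((n : ℝ)⁻¹ • ∑ i, e i)‖) :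
    0 < ⟪(n : ℝ)⁻¹ • ∑ i, J i (e i),
          ((n : ℝ)⁻¹ • ∑ i, J i + ε) ((n : ℝ)⁻¹ • ∑ i, e i)⟫ := by
  have hgap : ‖(n : ℝ)⁻¹ • ∑ i, J i (e i) - ((n : ℝ)⁻¹ • ∑ i, J i) ((n : ℝ)⁻¹ • ∑ i, e i)‖
      ≤ (1 / 2) * L_J * L_e * (((n : ℝ) ^ 2)⁻¹ * ∑ i, ∑ j, ‖x i - x j‖ ^ 2) := by
    have hcov := inv_card_smul_sum_apply_sub_apply_inv_card_smul_sum J e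
    rw [Fintype.card_fin] at hcov
    rw [hcov, norm_smul, Real.norm_of_nonneg (by positivity)]
    calc (2 * (n : ℝ) ^ 2)⁻¹ * ‖∑ i, ∑ j, (J i - J j) (e i - e j)‖
        ≤ (2 * (n : ℝ) ^ 2)⁻¹ * (L_J * L_e * ∑ i, ∑ j, ‖x i - x j‖ ^ 2) :=
          mul_le_mul_of_nonneg_left (norm_sum_sum_apply_sub_apply_sub_le J e x hJ he)
            (by positivity)
      _ = _ := by rw [mul_inv]; ring
  rw [add_apply]
  exact real_inner_add_pos_of_norm_sub_add_norm_lt (by linarith)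

/-- **Proposition 2: descent direction of the pseudo-zeroth-order
gradient.** With transposed Jacobians `J_i` and errors `e_i` that are Lipschitz
in the data `x_i`, a fixed error matrix `ε`, `M := (1/n) ∑_i J_i + ε`,
`ē := (1/n) ∑_i e_i`, `g := (1/n) ∑_i J_i e_i`, `Δ_x := (1/n²) ∑_{i,j} ‖x_i − x_j‖²`
and `e_ε := ‖ε ē‖`: if `‖g‖ > (1/2) L_J L_e Δ_x + e_ε` then `⟪g, M ē⟫ > 0`. -/
theorem stmt12 {p d m n : ℕ} (hn : 1 ≤ n) (L_J L_e : ℝ)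
    (x : Fin n → EuclideanSpace ℝ (Fin p))
    (J : Fin n → EuclideanSpace ℝ (Fin m) →L[ℝ] EuclideanSpace ℝ (Fin d))
    (e : Fin n → EuclideanSpace ℝ (Fin m))
    (ε : EuclideanSpace ℝ (Fin m) →L[ℝ] EuclideanSpace ℝ (Fin d))
    (hJ : ∀ i j, ‖J i - J j‖ ≤ L_J * ‖x i - x j‖)
    (he : ∀ i j, ‖e i - e j‖ ≤ L_e * ‖x i - x j‖)
    (hbig : ‖(n : ℝ)⁻¹ • ∑ i, J i (e i)‖
      > (1 / 2) * L_J * L_e * (((n : ℝ) ^ 2)⁻¹ * ∑ i, ∑ j, ‖x i - x j‖ ^ 2)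
        + ‖ε ((n : ℝ)⁻¹ • ∑ i, e i)‖) :
    0 < ⟪(n : ℝ)⁻¹ • ∑ i, J i (e i),
          ((n : ℝ)⁻¹ • ∑ i, J i + ε) ((n : ℝ)⁻¹ • ∑ i, e i)⟫ :=
  stmt12_general L_J L_e x J e ε hJ he hbig
end
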